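/- Let p ∈ [1, ∞], γ ∈ ℝ, 0 < ν < μ < ∞, let g : (0,∞) → (0,∞) satisfy g(t) → ∞ and g(t)/t^{α/(2β)} → 0 as t → ∞, and let f(x,t) := (1+t)^{−γ} χ_{B₁}(x), where B₁ is the unit ball of ℝ^N. Then there exist c > 0 and t₀ ≥ 2 such that the mild solution u satisfies, for all t ≥ t₀: ‖u(·,t)‖_{L^p({ν ≤ |x|/g(t) ≤ μ})} ≥ c g(t)^{4β−N(1−1/p)} t^{−(γ+α)} if γ < 1; ≥ c g(t)^{4β−N(1−1/p)} t^{−(1+α)} log t if γ = 1; and ≥ c g(t)^{4β−N(1−1/p)} t^{−(1+α)} if γ > 1. -/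

import Mathlib

/-!
For `ν g(t) ≤ |x| ≤ μ g(t)`, `y ∈ B₁` and `0 < s ≤ t/2`, the rescaled argument
`|x - y| (t - s)^{-α/(2β)}` of `G` is at most `1`, because `g(t) = o(t^{α/(2β)})`. The bound
`G(ξ) ≥ c₁ |ξ|^{4β-N}` near the origin then gives `Y(x - y, t - s) ≳ g(t)^{4β-N} t^{-1-α}`, hence
`u(x,t) ≳ g(t)^{4β-N} t^{-1-α} ∫₀^{t/2} (1+s)^{-γ} ds` on the annulus, whose measure is `≍ g(t)^N`.
The time integral is `≍ t^{1-γ}`, `log t` or `1` according as `γ < 1`, `γ = 1` or `γ > 1`.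
-/

open MeasureTheory Real Set Filter Module
open scoped ENNReal Topology

section Kernel

variable {E : Type*} [NormedAddCommGroup E] [NormedSpace ℝ E]

/-- The kernel `Y` of the paper, with the dimension `N` in its exponent replaced by a real `d`. -/
noncomputable def nonlocalHeatKernel (α β d : ℝ) (G : E → ℝ) (z : E) (σ : ℝ) : ℝ :=
  σ ^ (α - 1 - α * d / (2 * β)) * G (σ ^ (-(α / (2 * β))) • z)

lemma rpow_mul_norm_rpow_smul_rpow {σ : ℝ} (hσ : 0 < σ) (a q e : ℝ) (z : E) :
    σ ^ a * ‖σ ^ (-q) • z‖ ^ e = σ ^ (a - q * e) * ‖z‖ ^ e := by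
  rw [norm_smul, norm_of_nonneg (rpow_nonneg hσ.le _),
    mul_rpow (rpow_nonneg hσ.le _) (norm_nonneg _), ← rpow_mul hσ.le, ← mul_assoc, ← rpow_add hσ]
  ring_nf

variable {α β d : ℝ} {G : E → ℝ}

lemma nonlocalHeatKernel_nonneg (hG : ∀ ξ, 0 ≤ G ξ) (z : E) {σ : ℝ} (hσ : 0 ≤ σ) :
    0 ≤ nonlocalHeatKernel α β d G z σ :=
  mul_nonneg (rpow_nonneg hσ _) (hG _)

lemma measurable_uncurry_nonlocalHeatKernel [MeasurableSpace E] [BorelSpace E]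
    (hG : Measurable G) :
    Measurable (Function.uncurry (nonlocalHeatKernel α β d G)) := by
  unfold nonlocalHeatKernel Function.uncurry
  exact (by fun_prop : Measurable fun p : E × ℝ => p.2 ^ (α - 1 - α * d / (2 * β))).mul
    (hG.comp (by fun_prop))

lemma le_nonlocalHeatKernel {c₁ t σ R : ℝ} (hα : 0 ≤ α) (hβ : 0 < β) (hd : 4 * β ≤ d)
    (hc₁ : 0 ≤ c₁) (hG : ∀ ξ : E, 0 < ‖ξ‖ → ‖ξ‖ ≤ 1 → c₁ * ‖ξ‖ ^ (4 * β - d) ≤ G ξ)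
    (ht : 0 < t) (hσt : t / 2 ≤ σ) (hσ : σ ≤ t) (hRt : R ≤ (t / 2) ^ (α / (2 * β)))
    {z : E} (hz : 0 < ‖z‖) (hzR : ‖z‖ ≤ R) :
    c₁ * R ^ (4 * β - d) * t ^ (-1 - α) ≤ nonlocalHeatKernel α β d G z σ := by
  set q := α / (2 * β)
  have hσ0 : 0 < σ := by linarith
  have hξ : ‖σ ^ (-q) • z‖ = σ ^ (-q) * ‖z‖ := by
    rw [norm_smul, norm_of_nonneg (rpow_nonneg hσ0.le _)]
  have hξ1 : ‖σ ^ (-q) • z‖ ≤ 1 := calc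
    ‖σ ^ (-q) • z‖ ≤ (t / 2) ^ (-q) * (t / 2) ^ q := by
      rw [hξ]
      gcongr ?_ * ?_
      · exact rpow_le_rpow_of_nonpos (by positivity) hσt (by simp; positivity)
      · exact hzR.trans hRt
    _ = 1 := by rw [← rpow_add (by positivity), neg_add_cancel, rpow_zero]
  calc c₁ * R ^ (4 * β - d) * t ^ (-1 - α)
      ≤ c₁ * ‖z‖ ^ (4 * β - d) * σ ^ (-1 - α) := by
        gcongr ?_ * ?_ * ?_
        · exact rpow_le_rpow_of_nonpos hz hzR (by linarith)
        · exact rpow_le_rpow_of_nonpos hσ0 hσ (by linarith)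
    _ = σ ^ (α - 1 - α * d / (2 * β)) * (c₁ * ‖σ ^ (-q) • z‖ ^ (4 * β - d)) := by
        have hexp : α - 1 - α * d / (2 * β) - q * (4 * β - d) = -1 - α := by
          simp only [q]; field_simp; ring
        rw [mul_left_comm, rpow_mul_norm_rpow_smul_rpow hσ0, hexp]
        ring
    _ ≤ nonlocalHeatKernel α β d G z σ := by
        unfold nonlocalHeatKernel
        gcongr
        exact hG _ (by rw [hξ]; positivity) hξ1

lemma nonlocalHeatKernel_le {c₂ σ : ℝ} (hα : 0 < α) (hβ : 0 < β) (hd : 4 * β ≤ d)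
    (hc₂ : 0 ≤ c₂) (hGin : ∀ ξ : E, 0 < ‖ξ‖ → ‖ξ‖ ≤ 1 → G ξ ≤ c₂ * ‖ξ‖ ^ (4 * β - d))
    (hGout : ∀ ξ : E, 1 ≤ ‖ξ‖ → G ξ ≤ c₂ * ‖ξ‖ ^ (-(d + 2 * β)))
    (hσ : 0 < σ) {z : E} (hz : 1 ≤ ‖z‖) :
    nonlocalHeatKernel α β d G z σ ≤ c₂ + c₂ * σ ^ (2 * α - 1) := by
  set q := α / (2 * β)
  have hq : 0 < q := by positivity
  have hξ : ‖σ ^ (-q) • z‖ = σ ^ (-q) * ‖z‖ := by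
    rw [norm_smul, norm_of_nonneg (rpow_nonneg hσ.le _)]
  have hc₂σ : 0 ≤ c₂ * σ ^ (2 * α - 1) := by positivity
  unfold nonlocalHeatKernel
  rcases le_or_gt ‖σ ^ (-q) • z‖ 1 with hξ1 | hξ1
  · have hσ1 : 1 ≤ σ := by
      by_contra! hσ1
      have : 1 < σ ^ (-q) := one_lt_rpow_of_pos_of_lt_one_of_neg hσ hσ1 (by linarith)
      nlinarith [rpow_pos_of_pos hσ (-q)]
    have hexp : α - 1 - α * d / (2 * β) - q * (4 * β - d) = -1 - α := by
      simp only [q]; field_simp; ring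
    calc σ ^ (α - 1 - α * d / (2 * β)) * G (σ ^ (-q) • z)
        ≤ σ ^ (α - 1 - α * d / (2 * β)) * (c₂ * ‖σ ^ (-q) • z‖ ^ (4 * β - d)) := by
          gcongr
          exact hGin _ (by rw [hξ]; positivity) hξ1
      _ = c₂ * (σ ^ (-1 - α) * ‖z‖ ^ (4 * β - d)) := by
          rw [mul_left_comm, rpow_mul_norm_rpow_smul_rpow hσ, hexp]
      _ ≤ c₂ * (1 * 1) := by
          gcongr
          · exact rpow_le_one_of_one_le_of_nonpos hσ1 (by linarith)
          · exact rpow_le_one_of_one_le_of_nonpos hz (by linarith)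
      _ ≤ c₂ + c₂ * σ ^ (2 * α - 1) := by linarith
  · have hexp : α - 1 - α * d / (2 * β) - q * (-(d + 2 * β)) = 2 * α - 1 := by
      simp only [q]; field_simp; ring
    calc σ ^ (α - 1 - α * d / (2 * β)) * G (σ ^ (-q) • z)
        ≤ σ ^ (α - 1 - α * d / (2 * β)) * (c₂ * ‖σ ^ (-q) • z‖ ^ (-(d + 2 * β))) := by
          gcongr
          exact hGout _ hξ1.le
      _ = c₂ * σ ^ (2 * α - 1) * ‖z‖ ^ (-(d + 2 * β)) := by
          rw [mul_left_comm, rpow_mul_norm_rpow_smul_rpow hσ, hexp, mul_assoc]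
      _ ≤ c₂ * σ ^ (2 * α - 1) * 1 := by
          gcongr
          exact rpow_le_one_of_one_le_of_nonpos hz (by linarith)
      _ ≤ c₂ + c₂ * σ ^ (2 * α - 1) := by linarith

end Kernel

lemma continuousOn_one_add_rpow (r : ℝ) : ContinuousOn (fun s : ℝ => (1 + s) ^ r) (Ici 0) :=
  (continuousOn_const.add continuousOn_id).rpow_const fun s (hs : 0 ≤ s) =>
    Or.inl (by linarith : 0 < 1 + s).ne'

lemma mul_sub_le_setIntegral_Ioc {h : ℝ → ℝ} {a b c d m : ℝ} (hab : a ≤ b) (hbc : b ≤ c)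
    (hcd : c ≤ d) (hh : ContinuousOn h (Icc a d)) (hh0 : ∀ s ∈ Ioc a d, 0 ≤ h s)
    (hm : ∀ s ∈ Ioc b c, m ≤ h s) :
    m * (c - b) ≤ ∫ s in Ioc a d, h s := by
  have hint : IntegrableOn h (Ioc a d) := hh.integrableOn_Icc.mono_set Ioc_subset_Icc_self
  have hsub : Ioc b c ⊆ Ioc a d := Ioc_subset_Ioc hab hcd
  calc m * (c - b) = m * volume.real (Ioc b c) := by rw [Real.volume_real_Ioc_of_le hbc]
    _ ≤ ∫ s in Ioc b c, h s :=
        setIntegral_ge_of_const_le_real measurableSet_Ioc measure_Ioc_lt_top.ne hm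
          (hint.mono_set hsub)
    _ ≤ ∫ s in Ioc a d, h s :=
        setIntegral_mono_set hint ((ae_restrict_mem measurableSet_Ioc).mono hh0) hsub.eventuallyLE

section TimeIntegral

variable {γ t : ℝ}

lemma min_one_rpow_mul_rpow_le {x y : ℝ} (hx : 0 < x) (hxy : x / 4 ≤ y) (hyx : y ≤ x) :
    min 1 (4 ^ γ) * x ^ (-γ) ≤ y ^ (-γ) := by
  rcases le_or_gt 0 γ with hγ | hγ
  · calc min 1 (4 ^ γ) * x ^ (-γ) ≤ 1 * x ^ (-γ) := by gcongr; exact min_le_left _ _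
      _ ≤ y ^ (-γ) := by
        rw [one_mul]; exact rpow_le_rpow_of_nonpos (by linarith) hyx (by linarith)
  · calc min 1 (4 ^ γ) * x ^ (-γ) ≤ 4 ^ γ * x ^ (-γ) := by gcongr; exact min_le_right _ _
      _ = (x / 4) ^ (-γ) := by
        rw [div_rpow hx.le (by norm_num), rpow_neg (by norm_num : (0 : ℝ) ≤ 4), div_inv_eq_mul,
          mul_comm]
      _ ≤ y ^ (-γ) := rpow_le_rpow (by positivity) hxy (by linarith)

lemma mul_rpow_one_sub_le_integral_one_add_rpow_neg (ht : 2 ≤ t) :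
    min 1 (4 ^ γ) / 4 * t ^ (1 - γ) ≤ ∫ s in Ioc 0 (t / 2), (1 + s) ^ (-γ) := by
  have := mul_sub_le_setIntegral_Ioc (m := min 1 (4 ^ γ) * t ^ (-γ)) (by linarith : 0 ≤ t / 4)
    (by linarith : t / 4 ≤ t / 2) le_rfl ((continuousOn_one_add_rpow _).mono Icc_subset_Ici_self)
    (fun s hs => rpow_nonneg (by linarith [hs.1]) _)
    (fun s hs => min_one_rpow_mul_rpow_le (by linarith) (by linarith [hs.1]) (by linarith [hs.2]))
  convert this using 1
  rw [rpow_sub (by linarith), rpow_one, rpow_neg (by linarith)]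
  ring

lemma two_rpow_neg_le_integral_one_add_rpow_neg (hγ : 0 ≤ γ) (ht : 2 ≤ t) :
    (2 : ℝ) ^ (-γ) ≤ ∫ s in Ioc 0 (t / 2), (1 + s) ^ (-γ) := by
  have := mul_sub_le_setIntegral_Ioc (m := (2 : ℝ) ^ (-γ)) le_rfl zero_le_one
    (by linarith : 1 ≤ t / 2) ((continuousOn_one_add_rpow _).mono Icc_subset_Ici_self)
    (fun s hs => rpow_nonneg (by linarith [hs.1]) _)
    (fun s hs => rpow_le_rpow_of_nonpos (by linarith [hs.1]) (by linarith [hs.2]) (by linarith))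
  simpa using this

lemma integral_one_add_rpow_neg_one (ht : 0 ≤ t) :
    ∫ s in Ioc 0 t, (1 + s) ^ (-1 : ℝ) = log (1 + t) := by
  rw [← intervalIntegral.integral_of_le ht]
  simp only [rpow_neg_one]
  rw [intervalIntegral.integral_comp_add_left (fun s => s⁻¹), add_zero,
    integral_inv_of_pos one_pos (by linarith), div_one]

lemma log_div_two_le_integral_one_add_rpow_neg_one (ht : 0 < t) :
    log t / 2 ≤ ∫ s in Ioc 0 (t / 2), (1 + s) ^ (-1 : ℝ) := by
  rw [integral_one_add_rpow_neg_one (by linarith), div_le_iff₀ two_pos, mul_comm,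
    ← log_rpow (by linarith)]
  exact log_le_log ht (by norm_num; nlinarith)

end TimeIntegral

lemma exists_decay_le_integral_one_add_rpow_neg (α γ : ℝ) : ∃ c > 0, ∀ t ≥ 2,
    (γ < 1 → c * t ^ (-(γ + α)) ≤ t ^ (-1 - α) * ∫ s in Ioc 0 (t / 2), (1 + s) ^ (-γ)) ∧
    (γ = 1 → c * (t ^ (-(1 + α)) * log t) ≤ t ^ (-1 - α) * ∫ s in Ioc 0 (t / 2), (1 + s) ^ (-γ)) ∧
    (1 < γ → c * t ^ (-(1 + α)) ≤ t ^ (-1 - α) * ∫ s in Ioc 0 (t / 2), (1 + s) ^ (-γ)) := by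
  rcases lt_trichotomy γ 1 with hγ | rfl | hγ
  · refine ⟨min 1 (4 ^ γ) / 4, by positivity, fun t ht => ⟨fun _ => ?_, fun h => absurd h hγ.ne,
      fun h => absurd h hγ.not_gt⟩⟩
    have ht0 : 0 < t := by linarith
    calc min 1 (4 ^ γ) / 4 * t ^ (-(γ + α)) = t ^ (-1 - α) * (min 1 (4 ^ γ) / 4 * t ^ (1 - γ)) := by
          rw [mul_left_comm, ← rpow_add ht0]; ring_nf
      _ ≤ _ := by gcongr; exact mul_rpow_one_sub_le_integral_one_add_rpow_neg ht
  · refine ⟨1 / 2, by norm_num, fun t ht => ⟨fun h => absurd h (lt_irrefl 1), fun _ => ?_,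
      fun h => absurd h (lt_irrefl 1)⟩⟩
    rw [show -(1 + α) = -1 - α by ring, mul_left_comm, one_div_mul_eq_div]
    gcongr
    exact log_div_two_le_integral_one_add_rpow_neg_one (by linarith)
  · refine ⟨2 ^ (-γ), by positivity, fun t ht => ⟨fun h => absurd h hγ.not_gt,
      fun h => absurd h hγ.ne', fun _ => ?_⟩⟩
    rw [show -(1 + α) = -1 - α by ring, mul_comm]
    gcongr
    exact two_rpow_neg_le_integral_one_add_rpow_neg (by linarith) ht

lemma integral_mul_const_mul_indicator {X : Type*} [MeasurableSpace X] {ν : Measure X}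
    {s : Set X} (hs : MeasurableSet s) (k : X → ℝ) (c : ℝ) :
    ∫ y, k y * (c * s.indicator (fun _ => (1 : ℝ)) y) ∂ν = c * ∫ y in s, k y ∂ν := by
  have : (fun y => k y * (c * s.indicator (fun _ => (1 : ℝ)) y)) =
      s.indicator (fun y => c * k y) := by
    ext y
    by_cases hy : y ∈ s <;> simp [hy, mul_comm]
  rw [this, integral_indicator hs, integral_const_mul]

lemma one_le_norm_sub_of_mem_ball {E : Type*} [SeminormedAddCommGroup E] {x y : E} (hx : 2 ≤ ‖x‖)
    (hy : y ∈ Metric.ball (0 : E) 1) : 1 ≤ ‖x - y‖ := by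
  rw [mem_ball_zero_iff] at hy
  linarith [norm_sub_norm_le x y]

section Duhamel

variable {E : Type*} [NormedAddCommGroup E] [MeasurableSpace E] [ProperSpace E]
  {μ : Measure E} [IsFiniteMeasureOnCompacts μ] {K : E → ℝ → ℝ} {M : ℝ → ℝ} {x : E} {σ : ℝ}

lemma norm_setIntegral_ball_le (hK0 : ∀ z σ, 0 ≤ σ → 0 ≤ K z σ)
    (hKM : ∀ z σ, 1 ≤ ‖z‖ → 0 < σ → K z σ ≤ M σ) (hx : 2 ≤ ‖x‖) (hσ : 0 < σ) :
    ‖∫ y in Metric.ball 0 1, K (x - y) σ ∂μ‖ ≤ M σ * μ.real (Metric.ball 0 1) := by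
  refine norm_setIntegral_le_of_norm_le_const measure_ball_lt_top fun y hy => ?_
  rw [norm_of_nonneg (hK0 _ _ hσ.le)]
  exact hKM _ _ (one_le_norm_sub_of_mem_ball hx hy) hσ

lemma le_setIntegral_ball [BorelSpace E] {Λ R : ℝ} (hKmeas : Measurable (Function.uncurry K))
    (hK0 : ∀ z σ, 0 ≤ σ → 0 ≤ K z σ) (hKM : ∀ z σ, 1 ≤ ‖z‖ → 0 < σ → K z σ ≤ M σ)
    (hKΛ : ∀ z, 1 ≤ ‖z‖ → ‖z‖ ≤ R → Λ ≤ K z σ) (hx : 2 ≤ ‖x‖) (hxR : ‖x‖ + 1 ≤ R)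
    (hσ : 0 < σ) :
    Λ * μ.real (Metric.ball 0 1) ≤ ∫ y in Metric.ball 0 1, K (x - y) σ ∂μ := by
  have hint : IntegrableOn (fun y => K (x - y) σ) (Metric.ball 0 1) μ := by
    refine Measure.integrableOn_of_bounded (M := M σ) measure_ball_lt_top.ne
      (hKmeas.comp (f := fun y => (x - y, σ)) (by fun_prop)).aestronglyMeasurable ?_
    filter_upwards [ae_restrict_mem measurableSet_ball] with y hy
    rw [norm_of_nonneg (hK0 _ _ hσ.le)]
    exact hKM _ _ (one_le_norm_sub_of_mem_ball hx hy) hσ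
  refine setIntegral_ge_of_const_le_real measurableSet_ball measure_ball_lt_top.ne
    (fun y hy => hKΛ _ (one_le_norm_sub_of_mem_ball hx hy) ?_) hint
  rw [mem_ball_zero_iff] at hy
  linarith [norm_sub_le x y]

-- The Bochner integral of a non-integrable function is `0`: this is what the bound `M` is for.
lemma integrableOn_mul_setIntegral_ball [BorelSpace E] {w : ℝ → ℝ} {t : ℝ}
    (hKmeas : Measurable (Function.uncurry K)) (hK0 : ∀ z σ, 0 ≤ σ → 0 ≤ K z σ)
    (hKM : ∀ z σ, 1 ≤ ‖z‖ → 0 < σ → K z σ ≤ M σ) (hM : IntervalIntegrable M volume 0 t)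
    (hw : ContinuousOn w (Icc 0 t)) (ht : 0 < t) (hx : 2 ≤ ‖x‖) :
    IntegrableOn (fun s => w s * ∫ y in Metric.ball 0 1, K (x - y) (t - s) ∂μ) (Ioc 0 t) := by
  set V : ℝ → ℝ := fun s => ∫ y in Metric.ball 0 1, K (x - y) (t - s) ∂μ
  have hVmeas : StronglyMeasurable V :=
    StronglyMeasurable.integral_prod_right (f := fun s y => K (x - y) (t - s))
      (hKmeas.comp (f := fun p : ℝ × E => (x - p.2, t - p.1)) (by fun_prop)).stronglyMeasurable
  have hMt : IntegrableOn (fun s => M (t - s)) (Ioo 0 t) := by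
    have := (hM.comp_sub_left t).symm
    rw [sub_self, sub_zero] at this
    exact (intervalIntegrable_iff_integrableOn_Ioo_of_le ht.le).1 this
  have hVint : IntegrableOn V (Ioo 0 t) := by
    refine (hMt.mul_const (μ.real (Metric.ball 0 1))).mono' hVmeas.aestronglyMeasurable ?_
    filter_upwards [ae_restrict_mem measurableSet_Ioo] with s hs
    exact norm_setIntegral_ball_le hK0 hKM hx (sub_pos.2 hs.2)
  exact (((integrableOn_Icc_iff_integrableOn_Ioo (f := V)).2 hVint).continuousOn_mul hw
    isCompact_Icc).mono_set Ioc_subset_Icc_self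

lemma le_integral_duhamel [BorelSpace E] {w : ℝ → ℝ} {t Λ R : ℝ}
    (hKmeas : Measurable (Function.uncurry K)) (hK0 : ∀ z σ, 0 ≤ σ → 0 ≤ K z σ)
    (hKM : ∀ z σ, 1 ≤ ‖z‖ → 0 < σ → K z σ ≤ M σ) (hM : IntervalIntegrable M volume 0 t)
    (hKΛ : ∀ z σ, 1 ≤ ‖z‖ → ‖z‖ ≤ R → t / 2 ≤ σ → σ ≤ t → Λ ≤ K z σ)
    (hw : ContinuousOn w (Icc 0 t)) (hw0 : ∀ s ∈ Ioc 0 t, 0 ≤ w s) (ht : 0 < t)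
    (hx : 2 ≤ ‖x‖) (hxR : ‖x‖ + 1 ≤ R) :
    Λ * μ.real (Metric.ball 0 1) * ∫ s in Ioc 0 (t / 2), w s ≤
      ∫ s in Ioc 0 t, ∫ y, K (x - y) (t - s) *
        (w s * (Metric.ball (0 : E) 1).indicator (fun _ => (1 : ℝ)) y) ∂μ := by
  simp only [integral_mul_const_mul_indicator measurableSet_ball]
  have hint := integrableOn_mul_setIntegral_ball (μ := μ) hKmeas hK0 hKM hM hw ht hx
  have hsub : Ioc 0 (t / 2) ⊆ Ioc 0 t := Ioc_subset_Ioc_right (by linarith)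
  have hwint : IntegrableOn w (Ioc 0 (t / 2)) :=
    (hw.mono (Icc_subset_Icc_right (by linarith))).integrableOn_Icc.mono_set Ioc_subset_Icc_self
  calc Λ * μ.real (Metric.ball 0 1) * ∫ s in Ioc 0 (t / 2), w s
      = ∫ s in Ioc 0 (t / 2), Λ * μ.real (Metric.ball 0 1) * w s := (integral_const_mul _ _).symm
    _ ≤ ∫ s in Ioc 0 (t / 2), w s * ∫ y in Metric.ball 0 1, K (x - y) (t - s) ∂μ := by
        refine setIntegral_mono_on (hwint.const_mul _) (hint.mono_set hsub) measurableSet_Ioc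
          fun s hs => ?_
        rw [mul_comm]
        refine mul_le_mul_of_nonneg_left ?_ (hw0 s (hsub hs))
        exact le_setIntegral_ball hKmeas hK0 hKM (fun z h₁ h₂ => hKΛ z _ h₁ h₂
          (by linarith [hs.2]) (by linarith [hs.1])) hx hxR (by linarith [hs.2])
    _ ≤ ∫ s in Ioc 0 t, w s * ∫ y in Metric.ball 0 1, K (x - y) (t - s) ∂μ := by
        refine setIntegral_mono_set hint ((ae_restrict_mem measurableSet_Ioc).mono fun s hs => ?_)
          hsub.eventuallyLE
        exact mul_nonneg (hw0 s hs)
          (setIntegral_nonneg measurableSet_ball fun y _ => hK0 _ _ (sub_nonneg.2 hs.2))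

end Duhamel

lemma measure_annulus_ne_top {E : Type*} [NormedAddCommGroup E] [ProperSpace E]
    [MeasurableSpace E] (μ : Measure E) [IsFiniteMeasureOnCompacts μ] (a b : ℝ) :
    μ {x : E | a ≤ ‖x‖ ∧ ‖x‖ ≤ b} ≠ ∞ :=
  measure_ne_top_of_subset (fun x hx => by simpa using hx.2)
    (measure_closedBall_lt_top (x := (0 : E)) (r := b)).ne

section Annulus

variable {E : Type*} [NormedAddCommGroup E] [NormedSpace ℝ E] [MeasurableSpace E] [BorelSpace E]
  [FiniteDimensional ℝ E] (μ : Measure E) [μ.IsAddHaarMeasure]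

lemma le_measureReal_annulus {a b : ℝ} (ha : 0 ≤ a) (hab : a ≤ b) :
    (b ^ finrank ℝ E - a ^ finrank ℝ E) * μ.real (Metric.ball 0 1) ≤
      μ.real {x : E | a ≤ ‖x‖ ∧ ‖x‖ ≤ b} := by
  have hsub : Metric.closedBall (0 : E) b \ Metric.closedBall 0 a ⊆ {x | a ≤ ‖x‖ ∧ ‖x‖ ≤ b} := by
    rintro x ⟨hxb, hxa⟩
    simp only [Metric.mem_closedBall, dist_zero_right, not_le] at hxb hxa
    exact ⟨hxa.le, hxb⟩
  calc (b ^ finrank ℝ E - a ^ finrank ℝ E) * μ.real (Metric.ball 0 1)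
      = μ.real (Metric.closedBall (0 : E) b \ Metric.closedBall 0 a) := by
        rw [measureReal_sdiff (Metric.closedBall_subset_closedBall hab) measurableSet_closedBall
          measure_closedBall_lt_top.ne, Measure.addHaar_real_closedBall _ _ (ha.trans hab),
          Measure.addHaar_real_closedBall _ _ ha, sub_mul]
    _ ≤ μ.real {x : E | a ≤ ‖x‖ ∧ ‖x‖ ≤ b} := measureReal_mono hsub (measure_annulus_ne_top μ a b)

lemma ofReal_le_eLpNorm_restrict_annulus [Nontrivial E] {p : ℝ≥0∞} (hp : p ≠ 0) {v : E → ℝ}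
    {r a b L : ℝ} (hr : 0 < r) (ha : 0 < a) (hab : a < b) (hL : 0 ≤ L)
    (hv : ∀ x, a ≤ ‖x‖ / r → ‖x‖ / r ≤ b → L ≤ v x) :
    ENNReal.ofReal (L * r ^ ((finrank ℝ E : ℝ) / p.toReal) *
        ((b ^ finrank ℝ E - a ^ finrank ℝ E) * μ.real (Metric.ball 0 1)) ^ (1 / p.toReal)) ≤
      eLpNorm v p (μ.restrict {x | a ≤ ‖x‖ / r ∧ ‖x‖ / r ≤ b}) := by
  set n := finrank ℝ E
  set A := {x : E | a ≤ ‖x‖ / r ∧ ‖x‖ / r ≤ b}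
  set V := ((b * r) ^ n - (a * r) ^ n) * μ.real (Metric.ball 0 1)
  have hA : A = {x | a * r ≤ ‖x‖ ∧ ‖x‖ ≤ b * r} := by
    ext x
    simp only [A, mem_ofPred_eq, le_div_iff₀ hr, div_le_iff₀ hr]
  have hAm : MeasurableSet A := by
    rw [hA]
    exact (measurableSet_le measurable_const measurable_norm).inter
      (measurableSet_le measurable_norm measurable_const)
  have hAfin : μ A ≠ ∞ := hA ▸ measure_annulus_ne_top μ _ _
  have hvol : V ≤ μ.real A := hA ▸ le_measureReal_annulus μ (by positivity) (by nlinarith)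
  have hV : 0 < V := by
    have : (a * r) ^ n < (b * r) ^ n :=
      pow_lt_pow_left₀ (by nlinarith) (by positivity) finrank_pos.ne'
    have : 0 < μ.real (Metric.ball (0 : E) 1) :=
      ENNReal.toReal_pos (Metric.measure_ball_pos μ 0 one_pos).ne' measure_ball_lt_top.ne
    positivity
  have hA0 : μ.restrict A ≠ 0 := by
    rw [Ne, Measure.restrict_eq_zero]
    intro h
    have := hV.trans_le hvol
    simp [Measure.real, h] at this
  have hscale : r ^ ((n : ℝ) / p.toReal) *
      ((b ^ n - a ^ n) * μ.real (Metric.ball 0 1)) ^ (1 / p.toReal) = V ^ (1 / p.toReal) := by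
    have hV' : V = r ^ (n : ℝ) * ((b ^ n - a ^ n) * μ.real (Metric.ball 0 1)) := by
      rw [rpow_natCast]; ring
    rw [hV', mul_rpow (by positivity) (mul_nonneg (sub_nonneg.2 (pow_le_pow_left₀ ha.le hab.le n))
      measureReal_nonneg), ← rpow_mul hr.le, mul_one_div]
  calc ENNReal.ofReal (L * r ^ ((n : ℝ) / p.toReal) *
          ((b ^ n - a ^ n) * μ.real (Metric.ball 0 1)) ^ (1 / p.toReal))
      = ENNReal.ofReal L * ENNReal.ofReal V ^ (1 / p.toReal) := by
        rw [mul_assoc, hscale, ENNReal.ofReal_mul hL,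
          ENNReal.ofReal_rpow_of_nonneg hV.le (by positivity)]
    _ ≤ ENNReal.ofReal L * μ A ^ (1 / p.toReal) := by
        rw [← ofReal_measureReal hAfin]
        gcongr
    _ = eLpNorm (fun _ => L) p (μ.restrict A) := by
        rw [eLpNorm_const _ hp hA0, Real.enorm_of_nonneg hL, Measure.restrict_apply_univ]
    _ ≤ eLpNorm v p (μ.restrict A) := by
        refine eLpNorm_mono_ae ?_
        filter_upwards [ae_restrict_mem hAm] with x hx
        rw [norm_of_nonneg hL]
        exact (hv x hx.1 hx.2).trans (le_abs_self _)

theorem exists_ofReal_le_eLpNorm_duhamel [Nontrivial E] {α β c₁ c₂ γ a b : ℝ} {p : ℝ≥0∞}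
    {G : E → ℝ} (hα : 0 < α) (hβ : 0 < β) (hd : 4 * β ≤ finrank ℝ E) (hc₁ : 0 < c₁)
    (hc₂ : 0 ≤ c₂) (hGmeas : Measurable G) (hG0 : ∀ ξ, 0 ≤ G ξ)
    (hGlow : ∀ ξ : E, 0 < ‖ξ‖ → ‖ξ‖ ≤ 1 → c₁ * ‖ξ‖ ^ (4 * β - finrank ℝ E) ≤ G ξ)
    (hGin : ∀ ξ : E, 0 < ‖ξ‖ → ‖ξ‖ ≤ 1 → G ξ ≤ c₂ * ‖ξ‖ ^ (4 * β - finrank ℝ E))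
    (hGout : ∀ ξ : E, 1 ≤ ‖ξ‖ → G ξ ≤ c₂ * ‖ξ‖ ^ (-(finrank ℝ E + 2 * β)))
    (hp : p ≠ 0) (ha : 0 < a) (hab : a < b) :
    ∃ C > 0, ∀ t r : ℝ, 0 < t → 1 ≤ r → 2 / a ≤ r → (b + 1) * r ≤ (t / 2) ^ (α / (2 * β)) →
      ENNReal.ofReal (C * r ^ (4 * β - finrank ℝ E * (1 - 1 / p.toReal)) *
          (t ^ (-1 - α) * ∫ s in Ioc 0 (t / 2), (1 + s) ^ (-γ))) ≤
        eLpNorm (fun x => ∫ s in Ioc 0 t, ∫ y,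
            nonlocalHeatKernel α β (finrank ℝ E) G (x - y) (t - s) *
              ((1 + s) ^ (-γ) * (Metric.ball (0 : E) 1).indicator (fun _ => (1 : ℝ)) y) ∂μ)
          p (μ.restrict {x | a ≤ ‖x‖ / r ∧ ‖x‖ / r ≤ b}) := by
  set n := finrank ℝ E
  set B := Metric.ball (0 : E) 1
  have hB : 0 < μ.real B :=
    ENNReal.toReal_pos (Metric.measure_ball_pos μ 0 one_pos).ne' measure_ball_lt_top.ne
  have hX : 0 < b ^ n - a ^ n := sub_pos.2 (pow_lt_pow_left₀ hab ha.le finrank_pos.ne')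
  have hb : 0 < b + 1 := by linarith
  refine ⟨c₁ * (b + 1) ^ (4 * β - n) * μ.real B * ((b ^ n - a ^ n) * μ.real B) ^ (1 / p.toReal),
    by positivity, fun t r ht hr har hrt => ?_⟩
  rw [div_le_iff₀ ha, mul_comm] at har
  have hr0 : 0 < r := by linarith
  set J := ∫ s in Ioc 0 (t / 2), (1 + s) ^ (-γ)
  have hJ : 0 ≤ J :=
    setIntegral_nonneg measurableSet_Ioc fun s hs => rpow_nonneg (by linarith [hs.1]) _
  have hM : IntervalIntegrable (fun σ => c₂ + c₂ * σ ^ (2 * α - 1)) volume 0 t :=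
    intervalIntegrable_const.add
      ((intervalIntegral.intervalIntegrable_rpow' (by linarith)).const_mul c₂)
  have hpt : ∀ x : E, a ≤ ‖x‖ / r → ‖x‖ / r ≤ b →
      c₁ * ((b + 1) * r) ^ (4 * β - n) * t ^ (-1 - α) * μ.real B * J ≤
        ∫ s in Ioc 0 t, ∫ y, nonlocalHeatKernel α β n G (x - y) (t - s) *
          ((1 + s) ^ (-γ) * B.indicator (fun _ => (1 : ℝ)) y) ∂μ := by
    intro x hx₁ hx₂
    rw [le_div_iff₀ hr0] at hx₁
    rw [div_le_iff₀ hr0] at hx₂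
    exact le_integral_duhamel (measurable_uncurry_nonlocalHeatKernel hGmeas)
      (fun z _ hσ => nonlocalHeatKernel_nonneg hG0 z hσ)
      (fun _ _ hz hσ => nonlocalHeatKernel_le hα hβ hd hc₂ hGin hGout hσ hz) hM
      (fun _ _ hz hzR hσ₁ hσ₂ => le_nonlocalHeatKernel hα.le hβ hd hc₁.le hGlow ht hσ₁ hσ₂ hrt
        (by linarith) hzR)
      ((continuousOn_one_add_rpow _).mono Icc_subset_Ici_self)
      (fun s hs => rpow_nonneg (by linarith [hs.1]) _) ht (by linarith) (by linarith)
  refine le_trans (le_of_eq ?_) (ofReal_le_eLpNorm_restrict_annulus μ hp hr0 ha hab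
    (by positivity) hpt)
  rw [mul_rpow hb.le hr0.le,
    show 4 * β - n * (1 - 1 / p.toReal) = (4 * β - n) + n / p.toReal by ring, rpow_add hr0]
  congr 1
  ring

end Annulus

lemma eventually_mul_le_half_rpow {g : ℝ → ℝ} {q K : ℝ} (hK : 0 < K)
    (hg : Tendsto (fun t => g t / t ^ q) atTop (𝓝 0)) :
    ∀ᶠ t in atTop, K * g t ≤ (t / 2) ^ q := by
  filter_upwards [hg.eventually (gt_mem_nhds (by positivity : (0 : ℝ) < (1 / 2) ^ q / K)),
    eventually_gt_atTop 0] with t hgt ht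
  rw [div_lt_iff₀ (rpow_pos_of_pos ht q), div_mul_eq_mul_div, lt_div_iff₀ hK,
    ← mul_rpow (by norm_num) ht.le, one_div_mul_eq_div, mul_comm] at hgt
  exact hgt.le

theorem intermediate_lower_bound_memory_general
    (N : ℕ) (α β : ℝ)
    (hα : 0 < α ∧ α < 1) (hβ : 0 < β ∧ β ≤ 1) (hN : 4 * β < (N : ℝ))
    (G : EuclideanSpace ℝ (Fin N) → ℝ)
    (hGmeas : Measurable G) (hGnonneg : ∀ ξ, 0 ≤ G ξ)
    (c₁ c₂ : ℝ) (hc₁ : 0 < c₁) (hc₂ : 0 < c₂)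
    (hGin : ∀ ξ : EuclideanSpace ℝ (Fin N), 0 < ‖ξ‖ → ‖ξ‖ ≤ 1 →
      c₁ * ‖ξ‖ ^ (4 * β - (N : ℝ)) ≤ G ξ ∧ G ξ ≤ c₂ * ‖ξ‖ ^ (4 * β - (N : ℝ)))
    (hGout : ∀ ξ : EuclideanSpace ℝ (Fin N), 1 ≤ ‖ξ‖ →
      c₁ * ‖ξ‖ ^ (-((N : ℝ) + 2 * β)) ≤ G ξ ∧ G ξ ≤ c₂ * ‖ξ‖ ^ (-((N : ℝ) + 2 * β)))
    (Y : EuclideanSpace ℝ (Fin N) → ℝ → ℝ)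
    (hY : ∀ x t, Y x t = t ^ (α - 1 - α * (N : ℝ) / (2 * β)) * G ((t ^ (-(α / (2 * β)))) • x))
    (γ : ℝ) (f : EuclideanSpace ℝ (Fin N) → ℝ → ℝ)
    (hf : ∀ x t, f x t =
      (1 + t) ^ (-γ) * Set.indicator (Metric.ball (0 : EuclideanSpace ℝ (Fin N)) 1) (fun _ => (1:ℝ)) x)
    (u : EuclideanSpace ℝ (Fin N) → ℝ → ℝ)
    (hu : ∀ x t, u x t = ∫ s in Set.Ioc (0:ℝ) t, ∫ y, Y (x - y) (t - s) * f y s)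
    (p : ℝ≥0∞) (hp : 1 ≤ p)
    (ν μ : ℝ) (hν : 0 < ν) (hνμ : ν < μ)
    (g : ℝ → ℝ)
    (hginf : Tendsto g atTop atTop)
    (hgo : Tendsto (fun t => g t / t ^ (α / (2 * β))) atTop (nhds 0)) :
    ∃ c : ℝ, 0 < c ∧ ∃ t₀ : ℝ, 2 ≤ t₀ ∧ ∀ t : ℝ, t₀ ≤ t →
      (γ < 1 →
        ENNReal.ofReal (c * g t ^ (4 * β - (N : ℝ) * (1 - 1 / p.toReal)) * t ^ (-(γ + α))) ≤
          eLpNorm (fun x => u x t) p (volume.restrict {x : EuclideanSpace ℝ (Fin N) | ν ≤ ‖x‖ / g t ∧ ‖x‖ / g t ≤ μ})) ∧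
      (γ = 1 →
        ENNReal.ofReal (c * g t ^ (4 * β - (N : ℝ) * (1 - 1 / p.toReal)) *
            (t ^ (-(1 + α)) * Real.log t)) ≤
          eLpNorm (fun x => u x t) p (volume.restrict {x : EuclideanSpace ℝ (Fin N) | ν ≤ ‖x‖ / g t ∧ ‖x‖ / g t ≤ μ})) ∧
      (1 < γ →
        ENNReal.ofReal (c * g t ^ (4 * β - (N : ℝ) * (1 - 1 / p.toReal)) * t ^ (-(1 + α))) ≤
          eLpNorm (fun x => u x t) p (volume.restrict {x : EuclideanSpace ℝ (Fin N) | ν ≤ ‖x‖ / g t ∧ ‖x‖ / g t ≤ μ})) := by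
  have hN0 : 0 < N := by exact_mod_cast (by linarith [hβ.1] : (0 : ℝ) < N)
  have : Nontrivial (EuclideanSpace ℝ (Fin N)) :=
    Module.nontrivial_of_finrank_pos (R := ℝ) (by simpa using hN0)
  have hn : (finrank ℝ (EuclideanSpace ℝ (Fin N)) : ℝ) = N := by simp
  rw [← hn] at hN hGin hGout hY ⊢
  have hY' : Y = nonlocalHeatKernel α β (finrank ℝ (EuclideanSpace ℝ (Fin N))) G := by
    ext x t; exact hY x t
  obtain ⟨C, hC, hkey⟩ := exists_ofReal_le_eLpNorm_duhamel (μ := volume) (γ := γ) hα.1 hβ.1 hN.le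
    hc₁ hc₂.le hGmeas hGnonneg (fun ξ h₁ h₂ => (hGin ξ h₁ h₂).1) (fun ξ h₁ h₂ => (hGin ξ h₁ h₂).2)
    (fun ξ h => (hGout ξ h).2) (zero_lt_one.trans_le hp).ne' hν hνμ
  obtain ⟨c, hc, hdecay⟩ := exists_decay_le_integral_one_add_rpow_neg α γ
  obtain ⟨t₀, ht₀⟩ := eventually_atTop.1
    ((eventually_mul_le_half_rpow (K := μ + 1) (by linarith) hgo).and
      (hginf.eventually_ge_atTop (max 1 (2 / ν))))
  refine ⟨C * c, by positivity, max t₀ 2, le_max_right _ _, fun t ht => ?_⟩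
  obtain ⟨hgt, hg⟩ := ht₀ t (le_of_max_le_left ht)
  have hg1 : 1 ≤ g t := le_of_max_le_left hg
  have hbound := hkey t (g t) (by linarith [le_max_right t₀ 2]) hg1 (le_of_max_le_right hg) hgt
  simp only [hu, hf, hY']
  have hle : ∀ X, c * X ≤ t ^ (-1 - α) * ∫ s in Ioc 0 (t / 2), (1 + s) ^ (-γ) →
      ENNReal.ofReal (C * c * g t ^ (4 * β - (finrank ℝ (EuclideanSpace ℝ (Fin N)) : ℝ) *
        (1 - 1 / p.toReal)) * X) ≤ _ := fun X hX =>
    (ENNReal.ofReal_le_ofReal (by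
      rw [mul_right_comm C, mul_assoc _ c]
      exact mul_le_mul_of_nonneg_left hX (mul_nonneg hC.le (rpow_nonneg (by linarith) _)))).trans
      hbound
  obtain ⟨hlt, heq, hgt⟩ := hdecay t (le_of_max_le_right ht)
  exact ⟨fun hγ => hle _ (hlt hγ), fun hγ => hle _ (heq hγ), fun hγ => hle _ (hgt hγ)⟩

theorem intermediate_lower_bound_memory
    (N : ℕ) (α β : ℝ)
    (hα : 0 < α ∧ α < 1) (hβ : 0 < β ∧ β ≤ 1) (hN : 4 * β < (N : ℝ))
    (G : EuclideanSpace ℝ (Fin N) → ℝ)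
    (hGmeas : Measurable G) (hGnonneg : ∀ ξ, 0 ≤ G ξ)
    (c₁ c₂ : ℝ) (hc₁ : 0 < c₁) (hc₂ : 0 < c₂)
    (hGin : ∀ ξ : EuclideanSpace ℝ (Fin N), 0 < ‖ξ‖ → ‖ξ‖ ≤ 1 →
      c₁ * ‖ξ‖ ^ (4 * β - (N : ℝ)) ≤ G ξ ∧ G ξ ≤ c₂ * ‖ξ‖ ^ (4 * β - (N : ℝ)))
    (hGout : ∀ ξ : EuclideanSpace ℝ (Fin N), 1 ≤ ‖ξ‖ →
      c₁ * ‖ξ‖ ^ (-((N : ℝ) + 2 * β)) ≤ G ξ ∧ G ξ ≤ c₂ * ‖ξ‖ ^ (-((N : ℝ) + 2 * β)))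
    (Y : EuclideanSpace ℝ (Fin N) → ℝ → ℝ)
    (hY : ∀ x t, Y x t = t ^ (α - 1 - α * (N : ℝ) / (2 * β)) * G ((t ^ (-(α / (2 * β)))) • x))
    (γ : ℝ) (f : EuclideanSpace ℝ (Fin N) → ℝ → ℝ)
    (hf : ∀ x t, f x t =
      (1 + t) ^ (-γ) * Set.indicator (Metric.ball (0 : EuclideanSpace ℝ (Fin N)) 1) (fun _ => (1:ℝ)) x)
    (u : EuclideanSpace ℝ (Fin N) → ℝ → ℝ)
    (hu : ∀ x t, u x t = ∫ s in Set.Ioc (0:ℝ) t, ∫ y, Y (x - y) (t - s) * f y s)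
    (p : ℝ≥0∞) (hp : 1 ≤ p)
    (ν μ : ℝ) (hν : 0 < ν) (hνμ : ν < μ)
    (g : ℝ → ℝ) (hgpos : ∀ t : ℝ, 0 < t → 0 < g t)
    (hginf : Tendsto g atTop atTop)
    (hgo : Tendsto (fun t => g t / t ^ (α / (2 * β))) atTop (nhds 0)) :
    ∃ c : ℝ, 0 < c ∧ ∃ t₀ : ℝ, 2 ≤ t₀ ∧ ∀ t : ℝ, t₀ ≤ t →
      (γ < 1 →
        ENNReal.ofReal (c * g t ^ (4 * β - (N : ℝ) * (1 - 1 / p.toReal)) * t ^ (-(γ + α))) ≤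
          eLpNorm (fun x => u x t) p (volume.restrict {x : EuclideanSpace ℝ (Fin N) | ν ≤ ‖x‖ / g t ∧ ‖x‖ / g t ≤ μ})) ∧
      (γ = 1 →
        ENNReal.ofReal (c * g t ^ (4 * β - (N : ℝ) * (1 - 1 / p.toReal)) *
            (t ^ (-(1 + α)) * Real.log t)) ≤
          eLpNorm (fun x => u x t) p (volume.restrict {x : EuclideanSpace ℝ (Fin N) | ν ≤ ‖x‖ / g t ∧ ‖x‖ / g t ≤ μ})) ∧
      (1 < γ →
        ENNReal.ofReal (c * g t ^ (4 * β - (N : ℝ) * (1 - 1 / p.toReal)) * t ^ (-(1 + α))) ≤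
          eLpNorm (fun x => u x t) p (volume.restrict {x : EuclideanSpace ℝ (Fin N) | ν ≤ ‖x‖ / g t ∧ ‖x‖ / g t ≤ μ})) :=
  intermediate_lower_bound_memory_general N α β hα hβ hN G hGmeas hGnonneg c₁ c₂ hc₁ hc₂ hGin hGout
    Y hY γ f hf u hu p hp ν μ hν hνμ g hginf hgo
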